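/- Let n ≥ 1 be an integer and 0 < s < 1. Then the function x ↦ (1 − cos(x_1)) / |x|^{n+2s} is integrable on ℝ^n (with respect to Lebesgue measure), and its integral is strictly positive; here x_1 denotes the first coordinate of x ∈ ℝ^n. In particular the constant C_{n,s} := (∫_{ℝ^n} (1 − cos x_1)/|x|^{n+2s} dx)^{−1} is a well-defined positive real number. -/

import Mathlib

open MeasureTheory Filter Topology Metric Set RealInnerProductSpace
open scoped ENNReal NNReal

noncomputable section

/-- Euclidean space `ℝⁿ`. -/
abbrev Xc (n : ℕ) := EuclideanSpace ℝ (Fin n)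

/-- The fractional Dirichlet energy
`E_s(u,v) = ∫∫ (u(x)-u(y))(v(x)-v(y))/|x-y|^{n+2s} dx dy`. -/
noncomputable def Es (n : ℕ) (s : ℝ) (u v : Xc n → ℝ) : ℝ :=
  ∫ x : Xc n, ∫ y : Xc n, (u x - u y) * (v x - v y) / ‖x - y‖ ^ ((n : ℝ) + 2 * s)

/-- The squared Gagliardo seminorm `[u]_s^2 ∈ [0,∞]`. -/
noncomputable def gagliardoSq (n : ℕ) (s : ℝ) (u : Xc n → ℝ) : ℝ≥0∞ :=
  ∫⁻ x : Xc n, ∫⁻ y : Xc n, ENNReal.ofReal ((u x - u y) ^ 2 / ‖x - y‖ ^ ((n : ℝ) + 2 * s))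

/-- The conductivity bilinear form
`B_γ(u,v) = ∫∫ γ(x)^{1/2}γ(y)^{1/2}(u(x)-u(y))(v(x)-v(y))/|x-y|^{n+2s} dx dy`. -/
noncomputable def Bform (n : ℕ) (s : ℝ) (γ u v : Xc n → ℝ) : ℝ :=
  ∫ x : Xc n, ∫ y : Xc n,
    Real.sqrt (γ x) * Real.sqrt (γ y) * (u x - u y) * (v x - v y) / ‖x - y‖ ^ ((n : ℝ) + 2 * s)

/-- `φ ∈ C_c^∞(Ω)`: smooth, compactly supported, with (closed) support contained in `Ω`. -/
def IsTestOn (n : ℕ) (Ω : Set (Xc n)) (φ : Xc n → ℝ) : Prop :=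
  ContDiff ℝ (⊤ : ℕ∞) φ ∧ HasCompactSupport φ ∧ tsupport φ ⊆ Ω

/-- `w` lies in the closure of `C_c^∞(Ω)` with respect to the norm
`v ↦ (‖v‖_{L²}² + [v]_s²)^{1/2}`. -/
def InHsTilde (n : ℕ) (s : ℝ) (Ω : Set (Xc n)) (w : Xc n → ℝ) : Prop :=
  ∃ φ : ℕ → Xc n → ℝ, (∀ k, IsTestOn n Ω (φ k)) ∧
    Tendsto (fun k => eLpNorm (fun x => w x - φ k x) 2 volume ^ 2
      + gagliardoSq n s (fun x => w x - φ k x)) atTop (𝓝 0)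

/-- `u` is a weak solution of the `γ`-fractional conductivity equation in `Ω`
with exterior value `f`. -/
def IsWeakSol (n : ℕ) (s : ℝ) (Ω : Set (Xc n)) (γ f u : Xc n → ℝ) : Prop :=
  MemLp u 2 volume ∧ gagliardoSq n s u < ⊤ ∧
    InHsTilde n s Ω (fun x => u x - f x) ∧
    ∀ φ, IsTestOn n Ω φ → Bform n s γ u φ = 0

/-- Existence and (a.e.) uniqueness of the weak solution with exterior value `f`. -/
def UniqueSolvable (n : ℕ) (s : ℝ) (Ω : Set (Xc n)) (γ f : Xc n → ℝ) : Prop :=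
  ∃ u, IsWeakSol n s Ω γ f u ∧ ∀ v, IsWeakSol n s Ω γ f v → v =ᵐ[volume] u

/-- `γ₁` and `γ₂` have equal partial exterior Dirichlet-to-Neumann data
relative to `(Ω, W₁, W₂)`. -/
def EqualDNdata (n : ℕ) (s : ℝ) (Ω W1 W2 : Set (Xc n)) (γ1 γ2 : Xc n → ℝ) : Prop :=
  ∀ f, IsTestOn n W1 f → ∀ u1, IsWeakSol n s Ω γ1 f u1 → ∀ u2, IsWeakSol n s Ω γ2 f u2 →
    ∀ g, IsTestOn n W2 g → Bform n s γ1 u1 g = Bform n s γ2 u2 g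

/-- `Ω` is bounded in one direction. -/
def BoundedInOneDir (n : ℕ) (Ω : Set (Xc n)) : Prop :=
  ∃ (e : Xc n) (R : ℝ), ‖e‖ = 1 ∧ 0 < R ∧ ∀ x ∈ Ω, |⟪x, e⟫| ≤ R

/-- The first coordinate of `x ∈ ℝⁿ` (zero if `n = 0`). -/
def coordOne (n : ℕ) (x : Xc n) : ℝ :=
  if h : 0 < n then x ⟨0, h⟩ else 0

/-- The normalizing constant `C_{n,s} = (∫ (1 - cos x₁)/|x|^{n+2s} dx)⁻¹`. -/
noncomputable def Cns (n : ℕ) (s : ℝ) : ℝ :=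
  (∫ x : Xc n, (1 - Real.cos (coordOne n x)) / ‖x‖ ^ ((n : ℝ) + 2 * s))⁻¹

/-- The pointwise fractional Laplacian (second-difference form). -/
noncomputable def fracLap (n : ℕ) (s : ℝ) (v : Xc n → ℝ) (x : Xc n) : ℝ :=
  -(Cns n s / 2) * ∫ y : Xc n, (v (x + y) + v (x - y) - 2 * v x) / ‖y‖ ^ ((n : ℝ) + 2 * s)

/-- Convolution `(ρ ⋆ u)(x) = ∫ ρ(x-y) u(y) dy`. -/
noncomputable def convol (n : ℕ) (ρ u : Xc n → ℝ) (x : Xc n) : ℝ :=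
  ∫ y : Xc n, ρ (x - y) * u y

lemma aux_rpow_le {t q a : ℝ} (ht : 0 < t) (ha : 0 < a) (hq : 0 < q) (h : t ≤ a ^ (-q)) :
    a ≤ t ^ (-q⁻¹) := by
  have h2 := Real.rpow_le_rpow_of_nonpos ht h (neg_nonpos.mpr (by positivity : (0:ℝ) ≤ q⁻¹))
  rwa [← Real.rpow_mul ha.le, neg_mul_neg, mul_inv_cancel₀ hq.ne', Real.rpow_one] at h2

lemma aux_ball (n : ℕ) (hn : 1 ≤ n) {q : ℝ} (hq0 : 0 < q) (hqn : q < n) :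
    IntegrableOn (fun x : Xc n => ‖x‖ ^ (-q)) (ball (0 : Xc n) 1) volume := by
  have hmeas : Measurable fun x : Xc n => ‖x‖ ^ (-q) :=
    by fun_prop
  refine ⟨hmeas.aestronglyMeasurable, ?_⟩
  have hnn : ∀ x : Xc n, 0 ≤ ‖x‖ ^ (-q) := fun x => Real.rpow_nonneg (norm_nonneg _) _
  rw [hasFiniteIntegral_iff_norm]
  have : ∀ x : Xc n, ENNReal.ofReal ‖‖x‖ ^ (-q)‖ = ENNReal.ofReal (‖x‖ ^ (-q)) := by
    intro x; rw [Real.norm_of_nonneg (hnn x)]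
  simp_rw [this]
  set μr := volume.restrict (ball (0 : Xc n) 1)
  rw [lintegral_eq_lintegral_meas_le μr (ae_of_all _ hnn) hmeas.aemeasurable]
  have hkey : ∀ t, 0 < t →
      μr {a : Xc n | t ≤ ‖a‖ ^ (-q)} ≤ volume (closedBall (0 : Xc n) (t ^ (-q⁻¹))) := by
    intro t ht
    refine le_trans (Measure.restrict_le_self _) (measure_mono ?_)
    intro a ha
    simp only [mem_setOf_eq] at ha
    rcases eq_or_ne a 0 with rfl | h0
    · rw [norm_zero, Real.zero_rpow (neg_ne_zero.mpr hq0.ne')] at ha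
      exact (ht.not_ge ha).elim
    · exact mem_closedBall_zero_iff.mpr
        (aux_rpow_le ht (norm_pos_iff.mpr h0) hq0 ha)
  calc ∫⁻ t in Ioi (0:ℝ), μr {a : Xc n | t ≤ ‖a‖ ^ (-q)}
      ≤ ∫⁻ t in Ioc (0:ℝ) 1 ∪ Ioi 1, μr {a : Xc n | t ≤ ‖a‖ ^ (-q)} :=
        lintegral_mono_set Ioi_subset_Ioc_union_Ioi
    _ ≤ (∫⁻ t in Ioc (0:ℝ) 1, μr {a : Xc n | t ≤ ‖a‖ ^ (-q)})
        + ∫⁻ t in Ioi (1:ℝ), μr {a : Xc n | t ≤ ‖a‖ ^ (-q)} := lintegral_union_le _ _ _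
    _ < ⊤ := by
        refine ENNReal.add_lt_top.2 ⟨?_, ?_⟩
        · calc ∫⁻ t in Ioc (0:ℝ) 1, μr {a : Xc n | t ≤ ‖a‖ ^ (-q)}
              ≤ ∫⁻ _ in Ioc (0:ℝ) 1, volume (ball (0 : Xc n) 1) := by
                refine setLIntegral_mono' measurableSet_Ioc fun t ht => ?_
                exact le_of_le_of_eq (measure_mono (subset_univ _)) (Measure.restrict_apply_univ _)
            _ < ⊤ := by
                rw [setLIntegral_const]
                exact ENNReal.mul_lt_top measure_ball_lt_top (by simp)
        · have hfr : Module.finrank ℝ (Xc n) = n := finrank_euclideanSpace_fin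
          have hball : ∀ t ∈ Ioi (1:ℝ), μr {a : Xc n | t ≤ ‖a‖ ^ (-q)}
              ≤ ENNReal.ofReal (t ^ (-(q⁻¹ * n))) * volume (ball (0 : Xc n) 1) := by
            intro t ht
            have ht0 : (0:ℝ) < t := lt_trans one_pos ht
            refine (hkey t ht0).trans ?_
            rw [Measure.addHaar_closedBall _ _ (Real.rpow_nonneg ht0.le _), hfr]
            gcongr
            rw [← Real.rpow_natCast (t ^ (-q⁻¹)) n, ← Real.rpow_mul ht0.le, neg_mul]
          calc ∫⁻ t in Ioi (1:ℝ), μr {a : Xc n | t ≤ ‖a‖ ^ (-q)}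
              ≤ ∫⁻ t in Ioi (1:ℝ), ENNReal.ofReal (t ^ (-(q⁻¹ * n))) * volume (ball (0 : Xc n) 1) :=
                setLIntegral_mono' measurableSet_Ioi hball
            _ = (∫⁻ t in Ioi (1:ℝ), ENNReal.ofReal (t ^ (-(q⁻¹ * n)))) * volume (ball (0 : Xc n) 1) :=
                lintegral_mul_const' _ _ measure_ball_lt_top.ne
            _ < ⊤ := by
                refine ENNReal.mul_lt_top ?_ measure_ball_lt_top
                refine IntegrableOn.setLIntegral_lt_top ?_
                refine integrableOn_Ioi_rpow_of_lt ?_ one_pos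
                rw [neg_lt_neg_iff, ← div_eq_inv_mul]
                rw [lt_div_iff₀ hq0, one_mul] at *
                exact hqn

lemma aux_tail (n : ℕ) {p : ℝ} (hp : (n : ℝ) < p) :
    Integrable (fun x : Xc n => 2 * 2 ^ p * (1 + ‖x‖) ^ (-p)) volume := by
  have := integrable_one_add_norm (E := Xc n) (μ := volume) (r := p)
    (by rwa [finrank_euclideanSpace_fin])
  exact this.const_mul _

/-- The integrand defining `C_{n,s}` is integrable with strictly positive integral,
so `C_{n,s}` is a well-defined positive real number. -/
theorem stmt10 (n : ℕ) (hn : 1 ≤ n) (s : ℝ) (hs0 : 0 < s) (hs1 : s < 1) :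
    Integrable (fun x : Xc n =>
      (1 - Real.cos (coordOne n x)) / ‖x‖ ^ ((n : ℝ) + 2 * s)) volume ∧
    0 < ∫ x : Xc n, (1 - Real.cos (coordOne n x)) / ‖x‖ ^ ((n : ℝ) + 2 * s) ∧
    0 < Cns n s := by
  have hn0 : 0 < n := hn
  set p : ℝ := (n : ℝ) + 2 * s with hpdef
  have hnp : (n : ℝ) < p := by simp only [hpdef]; linarith
  have hp0 : 0 < p := lt_of_le_of_lt (Nat.cast_nonneg n) hnp
  set f : Xc n → ℝ := fun x => (1 - Real.cos (coordOne n x)) / ‖x‖ ^ p with hfdef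
  have hcoord : ∀ x : Xc n, coordOne n x = x ⟨0, hn0⟩ := fun x => dif_pos hn0
  have hcont : Continuous fun x : Xc n => coordOne n x := by
    simp only [hcoord]
    exact (EuclideanSpace.proj (⟨0, hn0⟩ : Fin n)).continuous
  have hmf : Measurable f := by
    refine Measurable.div ?_ (by fun_prop)
    exact (continuous_const.sub (Real.continuous_cos.comp hcont)).measurable
  have hfnonneg : ∀ x, 0 ≤ f x := fun x =>
    div_nonneg (by simp [sub_nonneg, Real.cos_le_one]) (Real.rpow_nonneg (norm_nonneg _) _)
  have habs : ∀ x : Xc n, |coordOne n x| ≤ ‖x‖ := by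
    intro x
    rw [hcoord, EuclideanSpace.norm_eq, Real.le_sqrt (abs_nonneg _) (by positivity), sq_abs]
    calc x ⟨0, hn0⟩ ^ 2 = ‖x ⟨0, hn0⟩‖ ^ 2 := by rw [Real.norm_eq_abs, sq_abs]
    _ ≤ _ := Finset.single_le_sum (f := fun j => ‖x j‖ ^ 2) (fun j _ => sq_nonneg _)
        (Finset.mem_univ _)
  have hbound0 : ∀ x : Xc n, x ≠ 0 → f x ≤ ‖x‖ ^ (2 - p) := by
    intro x hx
    have hxp : 0 < ‖x‖ := norm_pos_iff.mpr hx
    have h1 : 1 - Real.cos (coordOne n x) ≤ ‖x‖ ^ (2 : ℝ) := by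
      have h2 : 1 - Real.cos (coordOne n x) ≤ (coordOne n x) ^ 2 := by
        have := Real.one_sub_sq_div_two_le_cos (x := coordOne n x)
        nlinarith [sq_nonneg (coordOne n x)]
      refine h2.trans ?_
      rw [Real.rpow_two]
      calc (coordOne n x) ^ 2 = |coordOne n x| ^ 2 := (sq_abs _).symm
      _ ≤ ‖x‖ ^ 2 := by gcongr; exact habs x
    rw [hfdef]
    simp only
    rw [div_le_iff₀ (Real.rpow_pos_of_pos hxp _), ← Real.rpow_add hxp]
    calc 1 - Real.cos (coordOne n x) ≤ ‖x‖ ^ (2:ℝ) := h1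
    _ = ‖x‖ ^ (2 - p + p) := by ring_nf
  have hIball : IntegrableOn f (ball (0 : Xc n) 1) volume := by
    by_cases hp2 : 2 < p
    · have hq0 : 0 < p - 2 := by linarith
      have hqn : p - 2 < (n : ℝ) := by simp only [hpdef]; linarith
      refine Integrable.mono' (aux_ball n hn hq0 hqn) hmf.aestronglyMeasurable ?_
      refine ae_of_all _ fun x => ?_
      rw [Real.norm_of_nonneg (hfnonneg x)]
      rcases eq_or_ne x 0 with rfl | hx
      · have : f 0 = 0 := by
          simp only [hfdef, coordOne, dif_pos hn0]
          simp [Real.zero_rpow hp0.ne']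
        rw [this]
        exact Real.rpow_nonneg (norm_nonneg _) _
      · have := hbound0 x hx
        rwa [show (2 - p : ℝ) = -(p - 2) by ring] at this
    · push_neg at hp2
      refine Integrable.mono' (g := fun _ => (1:ℝ)) ((integrableOn_const_iff (C := (1:ℝ))).mpr (Or.inr measure_ball_lt_top))
        hmf.aestronglyMeasurable ?_
      refine (ae_restrict_iff' measurableSet_ball).mpr (ae_of_all _ fun x hx => ?_)
      rw [Real.norm_of_nonneg (hfnonneg x)]
      rcases eq_or_ne x 0 with rfl | hx0
      · have : f 0 = 0 := by
          simp only [hfdef, coordOne, dif_pos hn0]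
          simp [Real.zero_rpow hp0.ne']
        rw [this]; exact zero_le_one
      · refine (hbound0 x hx0).trans ?_
        exact Real.rpow_le_one (norm_nonneg _) (le_of_lt (mem_ball_zero_iff.mp hx))
          (by linarith)
  have hItail : IntegrableOn f (ball (0 : Xc n) 1)ᶜ volume := by
    refine Integrable.mono' ((aux_tail n hnp).integrableOn) hmf.aestronglyMeasurable ?_
    refine (ae_restrict_iff' measurableSet_ball.compl).mpr (ae_of_all _ fun x hx => ?_)
    have hx1 : 1 ≤ ‖x‖ := by
      simpa [not_lt] using fun h => hx (mem_ball_zero_iff.mpr h)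
    have hxp : 0 < ‖x‖ := lt_of_lt_of_le one_pos hx1
    rw [Real.norm_of_nonneg (hfnonneg x)]
    have h1 : (1 + ‖x‖) ^ p ≤ 2 ^ p * ‖x‖ ^ p := by
      rw [← Real.mul_rpow (by norm_num) (norm_nonneg _)]
      exact Real.rpow_le_rpow (by positivity) (by linarith) hp0.le
    have h2 : f x ≤ 2 / ‖x‖ ^ p := by
      rw [hfdef]
      simp only
      gcongr
      nlinarith [Real.neg_one_le_cos (coordOne n x)]
    have h3 : 2 / ‖x‖ ^ p ≤ 2 * 2 ^ p * (1 + ‖x‖) ^ (-p) := by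
      rw [Real.rpow_neg (by positivity : (0:ℝ) ≤ 1 + ‖x‖), ← div_eq_mul_inv,
        div_le_div_iff₀ (Real.rpow_pos_of_pos hxp _) (Real.rpow_pos_of_pos (by positivity) _)]
      nlinarith [h1, Real.rpow_nonneg (norm_nonneg x) p]
    exact h2.trans h3
  have hint : Integrable f volume := by
    rw [← integrableOn_univ, ← union_compl_self (ball (0 : Xc n) 1)]
    exact hIball.union hItail
  have hpos : 0 < ∫ x : Xc n, f x := by
    rw [integral_pos_iff_support_of_nonneg_ae (ae_of_all _ hfnonneg) hint]
    set U := (fun x : Xc n => coordOne n x) ⁻¹' Ioo 0 Real.pi with hU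
    have hUopen : IsOpen U := isOpen_Ioo.preimage hcont
    have hUsub : U ⊆ Function.support f := by
      intro x hx
      have h1 : 0 < coordOne n x ∧ coordOne n x < Real.pi := hx
      have hx0 : x ≠ 0 := by
        intro h
        rw [h] at h1
        have : coordOne n (0 : Xc n) = 0 := by
          simp [coordOne, dif_pos hn0]
        rw [this] at h1
        exact lt_irrefl 0 h1.1
      have hcos : Real.cos (coordOne n x) < 1 := by
        have := Real.cos_lt_cos_of_nonneg_of_le_pi (le_refl 0) h1.2.le h1.1
        rwa [Real.cos_zero] at this
      have : 0 < f x := div_pos (by linarith)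
        (Real.rpow_pos_of_pos (norm_pos_iff.mpr hx0) _)
      exact Function.mem_support.mpr this.ne'
    have hUne : U.Nonempty := by
      refine ⟨EuclideanSpace.single (⟨0, hn0⟩ : Fin n) (1 : ℝ), ?_⟩
      have : coordOne n (EuclideanSpace.single (⟨0, hn0⟩ : Fin n) (1 : ℝ)) = 1 := by
        simp [coordOne, dif_pos hn0, EuclideanSpace.single_apply]
      simp only [hU, mem_preimage, this]
      constructor
      · norm_num
      · linarith [Real.pi_gt_three]
    exact lt_of_lt_of_le (hUopen.measure_pos volume hUne) (measure_mono hUsub)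
  refine ⟨hint, hpos, ?_⟩
  rw [Cns]
  exact inv_pos.mpr hpos
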